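/- A d×d real matrix A is left stochastic if and only if A can be written as a convex combination of Permutation-Like Matrices: there exist N ≥ 1, λ₁,…,λ_N ∈ [0,1] with Σλᵢ = 1, and PLMs P₁,…,P_N such that A = Σ λᵢ Pᵢ (Birkhoff–Von Neumann theorem for left stochastic matrices). -/
import Mathlib


def IsPLM {d : ℕ} (A : Matrix (Fin d) (Fin d) ℝ) : Prop :=
  (∀ i j, A i j = 0 ∨ A i j = 1) ∧ ∀ j, ∃! i, A i j = 1

def LeftStochastic {d : ℕ} (A : Matrix (Fin d) (Fin d) ℝ) : Prop :=
  (∀ i j, 0 ≤ A i j) ∧ ∀ j, ∑ i, A i j = 1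

/-- Birkhoff–Von Neumann theorem for left stochastic matrices. -/
theorem leftStochastic_iff_convex_combination_plm {d : ℕ}
    (A : Matrix (Fin d) (Fin d) ℝ) :
    LeftStochastic A ↔
      ∃ N ≥ 1, ∃ lam : Fin N → ℝ, ∃ P : Fin N → Matrix (Fin d) (Fin d) ℝ,
        (∀ i, lam i ∈ Set.Icc (0 : ℝ) 1) ∧ ∑ i, lam i = 1 ∧
        (∀ i, IsPLM (P i)) ∧ A = ∑ i, lam i • P i := by
  classical
  constructor
  · rintro ⟨hpos, hsum⟩
    haveI : Nonempty (Fin d → Fin d) := ⟨id⟩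
    refine ⟨Fintype.card (Fin d → Fin d), Fintype.card_pos, ?_⟩
    set e : Fin (Fintype.card (Fin d → Fin d)) ≃ (Fin d → Fin d) :=
      (Fintype.equivFin _).symm with he
    have hs : ∑ n : Fin (Fintype.card (Fin d → Fin d)), ∏ k, A (e n k) k = 1 := by
      rw [Fintype.sum_equiv e _ (fun σ : Fin d → Fin d => ∏ k, A (σ k) k) (fun n => rfl)]
      have h := Finset.prod_univ_sum (fun _ : Fin d => (Finset.univ : Finset (Fin d)))
        (fun k m => A m k)
      rw [Fintype.piFinset_univ] at h
      rw [← h]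
      simp [hsum]
    have key : ∀ i j, ∑ σ : Fin d → Fin d,
        (∏ k, A (σ k) k) * (if σ j = i then (1:ℝ) else 0) = A i j := by
      intro i j
      have h1 : ∑ σ : Fin d → Fin d, (∏ k, A (σ k) k) * (if σ j = i then (1:ℝ) else 0)
          = ∑ σ ∈ Finset.univ.filter (fun σ : Fin d → Fin d => σ j = i),
              ∏ k, A (σ k) k := by
        rw [Finset.sum_filter]
        refine Finset.sum_congr rfl fun σ _ => ?_
        split <;> simp
      rw [h1]
      have h2 : Finset.univ.filter (fun σ : Fin d → Fin d => σ j = i)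
          = Fintype.piFinset (fun k => if k = j then ({i} : Finset (Fin d)) else Finset.univ) := by
        ext σ
        simp only [Finset.mem_filter, Finset.mem_univ, true_and, Fintype.mem_piFinset]
        constructor
        · intro h k
          split <;> simp_all
        · intro h
          have := h j
          simpa using this
      rw [h2, ← Finset.prod_univ_sum (fun k => if k = j then ({i} : Finset (Fin d)) else Finset.univ) (fun k m => A m k)]
      have h3 : ∀ k, (∑ m ∈ (if k = j then ({i} : Finset (Fin d)) else Finset.univ), A m k)
          = if k = j then A i j else 1 := by
        intro k
        by_cases hk : k = j
        · subst hk; simp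
        · simp [hk, hsum k]
      rw [Finset.prod_congr rfl (fun k _ => h3 k)]
      rw [Finset.prod_ite_eq' Finset.univ j (fun _ => A i j)]
      simp
    refine ⟨fun n => ∏ k, A (e n k) k,
      fun n => Matrix.of (fun i j => if e n j = i then 1 else 0), ?_, hs, ?_, ?_⟩
    · intro n
      constructor
      · exact Finset.prod_nonneg fun k _ => hpos _ _
      · calc ∏ k, A (e n k) k
            ≤ ∑ m : Fin (Fintype.card (Fin d → Fin d)), ∏ k, A (e m k) k :=
            Finset.single_le_sum (f := fun m => ∏ k, A (e m k) k) (fun m _ => Finset.prod_nonneg fun k _ => hpos _ _)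
              (Finset.mem_univ n)
          _ = 1 := hs
    · intro n
      refine ⟨fun i j => ?_, fun j => ⟨e n j, by simp, fun i hi => ?_⟩⟩
      · by_cases h : e n j = i <;> simp [h]
      · simp only [Matrix.of_apply] at hi
        split at hi
        · exact (by assumption : e n j = i).symm
        · norm_num at hi
    · ext i j
      simp only [Matrix.sum_apply, Matrix.smul_apply, Matrix.of_apply, smul_eq_mul]
      rw [Fintype.sum_equiv e _
        (fun σ : Fin d → Fin d => (∏ k, A (σ k) k) * (if σ j = i then (1:ℝ) else 0))
        (fun n => rfl)]
      exact (key i j).symm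
  · rintro ⟨N, hN, lam, P, hlam, hsumlam, hPLM, hA⟩
    constructor
    · intro i j
      rw [hA]
      simp only [Matrix.sum_apply, Matrix.smul_apply, smul_eq_mul]
      refine Finset.sum_nonneg fun n _ => mul_nonneg (hlam n).1 ?_
      rcases (hPLM n).1 i j with h | h <;> simp [h]
    · intro j
      rw [hA]
      simp only [Matrix.sum_apply, Matrix.smul_apply, smul_eq_mul]
      rw [Finset.sum_comm]
      have : ∀ n : Fin N, ∑ i, lam n * P n i j = lam n := by
        intro n
        rw [← Finset.mul_sum]
        obtain ⟨i₀, hi₀, huniq⟩ := (hPLM n).2 j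
        have : ∑ i, P n i j = 1 := by
          rw [Finset.sum_eq_single i₀]
          · exact hi₀
          · intro i _ hi
            rcases (hPLM n).1 i j with h | h
            · exact h
            · exact absurd (huniq i h) hi
          · simp
        rw [this, mul_one]
      simp [this, hsumlam]
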